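/- arXiv:2201.04440 — 5 statements merged into one kernel-verified Lean document; each statement's English description precedes it below -/
import Mathlib

section
/- Let E be a finite-dimensional real inner product space, S ⊆ E a nonempty closed convex set, L > 0, and f : E → ℝ a differentiable function whose gradient ∇f satisfies ‖∇f(x) − ∇f(y)‖ ≤ L‖x − y‖ for all x, y ∈ E. Let μ ∈ S, let α > 0, and let v ∈ S be a projection of μ + α∇f(μ) onto S, i.e. ‖v − (μ + α∇f(μ))‖ ≤ ‖w − (μ + α∇f(μ))‖ for all w ∈ S. Then f(v) ≥ f(μ) + (1/(2α) − L/2)·‖v − μ‖². -/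
/-!
Testing the projection inequality with `w = μ` gives `‖v - μ‖² ≤ α ⟪∇f μ, v - μ⟫`, while the
`L`-Lipschitz gradient bounds the first-order Taylor error of `f` along `[μ, v]` below by
`-(L/2) ‖v - μ‖²`. Adding the two gives the claim.
-/

open scoped RealInnerProductSpace

section Projection

variable {E : Type*} [NormedAddCommGroup E] [InnerProductSpace ℝ E]

theorem Convex.inner_sub_sub_nonpos_of_forall_norm_sub_le {S : Set E} (hS : Convex ℝ S)
    {u v : E} (hv : v ∈ S) (hmin : ∀ w ∈ S, ‖v - u‖ ≤ ‖w - u‖) :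
    ∀ w ∈ S, ⟪u - v, w - v⟫ ≤ 0 := by
  have : Nonempty S := ⟨⟨v, hv⟩⟩
  refine (norm_eq_iInf_iff_real_inner_le_zero hS hv).1 (le_antisymm (le_ciInf fun w => ?_)
    (ciInf_le ⟨0, by rintro _ ⟨w, rfl⟩; positivity⟩ (⟨v, hv⟩ : S)))
  simpa only [norm_sub_rev u] using hmin w w.2

theorem Convex.norm_sub_sq_le_inner_of_forall_norm_sub_le {S : Set E} (hS : Convex ℝ S)
    {μ v g : E} {α : ℝ} (hμ : μ ∈ S) (hv : v ∈ S)
    (hmin : ∀ w ∈ S, ‖v - (μ + α • g)‖ ≤ ‖w - (μ + α • g)‖) :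
    ‖v - μ‖ ^ 2 ≤ α * ⟪g, v - μ⟫ := by
  have h := hS.inner_sub_sub_nonpos_of_forall_norm_sub_le hv hmin μ hμ
  rw [show μ + α • g - v = α • g - (v - μ) by abel, show μ - v = -(v - μ) by abel,
    inner_neg_right, inner_sub_left, real_inner_smul_left, real_inner_self_eq_norm_sq] at h
  linarith

end Projection

section LipschitzGradient

variable {E : Type*} [NormedAddCommGroup E] [InnerProductSpace ℝ E] [CompleteSpace E]

theorem HasGradientAt.hasDerivAt_comp_add_smul {f : E → ℝ} {x d g : E} {t : ℝ}
    (hf : HasGradientAt f g (x + t • d)) :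
    HasDerivAt (fun s : ℝ => f (x + s • d)) ⟪g, d⟫ t := by
  have hline : HasDerivAt (fun s : ℝ => x + s • d) d t := by
    simpa using ((hasDerivAt_id t).smul_const d).const_add x
  exact ((hasGradientAt_iff_hasFDerivAt.1 hf).comp_hasDerivAt t hline).congr_deriv (by simp)

theorem add_inner_gradient_sub_sq_le {f : E → ℝ} {L : ℝ} (hf : Differentiable ℝ f)
    (hlip : ∀ x y : E, ‖gradient f x - gradient f y‖ ≤ L * ‖x - y‖) (x y : E) :
    f x + ⟪gradient f x, y - x⟫ - L / 2 * ‖y - x‖ ^ 2 ≤ f y := by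
  set d := y - x
  let φ : ℝ → ℝ := fun t => f (x + t • d) - t * ⟪gradient f x, d⟫ + L / 2 * t ^ 2 * ‖d‖ ^ 2
  have hφ' (t : ℝ) : HasDerivAt φ
      (⟪gradient f (x + t • d) - gradient f x, d⟫ + L * t * ‖d‖ ^ 2) t := by
    have := (((hf _).hasGradientAt.hasDerivAt_comp_add_smul (x := x) (d := d)).sub
      ((hasDerivAt_id t).mul_const ⟪gradient f x, d⟫)).add
      (((hasDerivAt_pow 2 t).const_mul (L / 2)).mul_const (‖d‖ ^ 2))
    exact this.congr_deriv (by rw [inner_sub_left]; push_cast; ring)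
  -- Along the segment the gradient moves by at most `L t ‖d‖`, so `φ` is monotone on `t ≥ 0`.
  have hφ'_nonneg (t : ℝ) (ht : 0 ≤ t) :
      0 ≤ ⟪gradient f (x + t • d) - gradient f x, d⟫ + L * t * ‖d‖ ^ 2 := by
    have hgrad : ‖gradient f (x + t • d) - gradient f x‖ ≤ L * t * ‖d‖ := by
      simpa [norm_smul, abs_of_nonneg ht, mul_assoc] using hlip (x + t • d) x
    have := (abs_le.1 ((abs_real_inner_le_norm _ d).trans
      (mul_le_mul_of_nonneg_right hgrad (norm_nonneg d)))).1
    nlinarith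
  have hmono : MonotoneOn φ (Set.Ici 0) :=
    monotoneOn_of_hasDerivWithinAt_nonneg (convex_Ici 0)
      (fun t _ => (hφ' t).continuousAt.continuousWithinAt)
      (fun t _ => (hφ' t).hasDerivWithinAt)
      (fun t ht => hφ'_nonneg t (interior_subset ht))
  have h01 := hmono Set.self_mem_Ici (Set.mem_Ici.2 zero_le_one) zero_le_one
  simp only [φ, d, zero_smul, add_zero, one_smul, add_sub_cancel, zero_mul, sub_zero,
    one_mul, one_pow, mul_one, ne_eq, OfNat.ofNat_ne_zero, not_false_eq_true, zero_pow,
    mul_zero] at h01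
  linarith

end LipschitzGradient

theorem stmt_0_general {E : Type*} [NormedAddCommGroup E] [InnerProductSpace ℝ E]
    [FiniteDimensional ℝ E]
    (S : Set E) (hS_conv : Convex ℝ S)
    (L : ℝ)
    (f : E → ℝ) (hf : Differentiable ℝ f)
    (hlip : ∀ x y : E, ‖gradient f x - gradient f y‖ ≤ L * ‖x - y‖)
    (μ : E) (hμ : μ ∈ S) (α : ℝ) (hα : 0 < α)
    (v : E) (hv : v ∈ S)
    (hproj : ∀ w ∈ S, ‖v - (μ + α • gradient f μ)‖ ≤ ‖w - (μ + α • gradient f μ)‖) :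
    f v ≥ f μ + (1 / (2 * α) - L / 2) * ‖v - μ‖ ^ 2 := by
  have hdescent := add_inner_gradient_sub_sq_le hf hlip μ v
  have hstep := hS_conv.norm_sub_sq_le_inner_of_forall_norm_sub_le hμ hv hproj
  have hinner : 1 / (2 * α) * ‖v - μ‖ ^ 2 ≤ ⟪gradient f μ, v - μ⟫ := by
    rw [one_div, ← div_eq_inv_mul, div_le_iff₀ (by positivity)]
    nlinarith [sq_nonneg ‖v - μ‖]
  linarith

/-- One projected-gradient ascent step on an `L`-smooth function `f` over a nonempty
closed convex set `S` satisfies `f(v) ≥ f(μ) + (1/(2α) − L/2)‖v − μ‖²`. -/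
theorem stmt_0 {E : Type*} [NormedAddCommGroup E] [InnerProductSpace ℝ E]
    [FiniteDimensional ℝ E]
    (S : Set E) (hS_ne : S.Nonempty) (hS_closed : IsClosed S) (hS_conv : Convex ℝ S)
    (L : ℝ) (hL : 0 < L)
    (f : E → ℝ) (hf : Differentiable ℝ f)
    (hlip : ∀ x y : E, ‖gradient f x - gradient f y‖ ≤ L * ‖x - y‖)
    (μ : E) (hμ : μ ∈ S) (α : ℝ) (hα : 0 < α)
    (v : E) (hv : v ∈ S)
    (hproj : ∀ w ∈ S, ‖v - (μ + α • gradient f μ)‖ ≤ ‖w - (μ + α • gradient f μ)‖) :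
    f v ≥ f μ + (1 / (2 * α) - L / 2) * ‖v - μ‖ ^ 2 :=
  stmt_0_general S hS_conv L f hf hlip μ hμ α hα v hv hproj
end

section
/- Let K be a positive integer, r > 0, and x ∈ ℝ^K. Let C = {μ ∈ ℝ^K : μ_k ≥ 0 for all k, and ‖μ‖ ≤ r} be the intersection of the closed Euclidean ball of radius r with the nonnegative orthant, and let [x]₊ ∈ ℝ^K denote the componentwise positive part of x, ([x]₊)_k = max(x_k, 0). Then the point μ* = (r / max(r, ‖[x]₊‖))·[x]₊ belongs to C and is the unique minimizer of ‖μ − x‖ over μ ∈ C; i.e. μ* is the Euclidean projection of x onto C. -/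
/-!
Write `x = x⁺ + (x - x⁺)` and `μ* = s • x⁺` with `s = r / max r ‖x⁺‖`. Then
`⟪x - μ*, μ - μ*⟫ = ⟪x - x⁺, μ - s • x⁺⟫ + ⟪x⁺ - s • x⁺, μ - s • x⁺⟫`, and both terms are
`≤ 0` for every `μ ∈ C`: the first because `x - x⁺` is nonpositive and vanishes where `x⁺` is
nonzero (the projection onto the orthant), the second because `s • x⁺` is the projection of `x⁺`
onto the ball of radius `r`. This variational inequality characterizes the projection onto a
convex set, and strict convexity of the square of the norm makes it unique.
-/

open scoped RealInnerProductSpace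

section InnerProductSpace

variable {E : Type*} [NormedAddCommGroup E] [InnerProductSpace ℝ E]

theorem norm_sub_lt_norm_sub_of_inner_sub_nonpos {x p y : E}
    (h : ⟪x - p, y - p⟫ ≤ 0) (hyp : y ≠ p) : ‖p - x‖ < ‖y - x‖ := by
  have hpos : 0 < ‖y - p‖ := norm_pos_iff.mpr (sub_ne_zero.mpr hyp)
  have hexpand : ‖y - x‖ ^ 2 = ‖p - x‖ ^ 2 - 2 * ⟪x - p, y - p⟫ + ‖y - p‖ ^ 2 := by
    rw [show y - x = (p - x) + (y - p) by abel, norm_add_sq_real, ← neg_sub x p, inner_neg_left]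
    ring
  have hsq : ‖p - x‖ ^ 2 < ‖y - x‖ ^ 2 := by rw [hexpand]; nlinarith
  exact lt_of_pow_lt_pow_left₀ 2 (norm_nonneg _) hsq

theorem norm_div_max_norm_smul_le {r : ℝ} (hr : 0 ≤ r) (y : E) :
    ‖(r / max r ‖y‖) • y‖ ≤ r := by
  have hM : 0 ≤ max r ‖y‖ := le_max_of_le_left hr
  rw [norm_smul, Real.norm_of_nonneg (div_nonneg hr hM), div_mul_eq_mul_div]
  rcases hM.eq_or_lt with hM | hM
  · rw [← hM, div_zero]; exact hr
  · exact div_le_of_le_mul₀ hM.le hr (mul_le_mul_of_nonneg_left (le_max_right _ _) hr)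

/-- The radial retraction `y ↦ (r / max r ‖y‖) • y` is the projection onto the closed ball. -/
theorem inner_sub_div_max_norm_smul_nonpos {r : ℝ} (hr : 0 ≤ r) {y μ : E} (hμ : ‖μ‖ ≤ r) :
    ⟪y - (r / max r ‖y‖) • y, μ - (r / max r ‖y‖) • y⟫ ≤ 0 := by
  set s := r / max r ‖y‖
  -- either `s = 1` or `s • y` lies on the sphere of radius `r`
  have hcompl : (1 - s) * (r - s * ‖y‖) = 0 := by
    rcases le_or_gt ‖y‖ r with hy | hy
    · rcases hr.eq_or_lt with rfl | hr
      · simp [norm_le_zero_iff.mp hy]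
      · simp [s, max_eq_left hy, div_self hr.ne']
    · have hy0 : ‖y‖ ≠ 0 := (hr.trans_lt hy).ne'
      simp [s, max_eq_right hy.le, div_mul_cancel₀ r hy0]
  have hs1 : 0 ≤ 1 - s :=
    sub_nonneg.mpr (div_le_one_of_le₀ (le_max_left _ _) (le_max_of_le_left hr))
  have hcs : ⟪y, μ⟫ ≤ ‖y‖ * r :=
    (real_inner_le_norm y μ).trans (mul_le_mul_of_nonneg_left hμ (norm_nonneg y))
  calc ⟪y - s • y, μ - s • y⟫ = (1 - s) * (⟪y, μ⟫ - s * ‖y‖ ^ 2) := by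
        simp only [inner_sub_left, inner_sub_right, real_inner_smul_left, real_inner_smul_right,
          real_inner_self_eq_norm_sq, norm_smul, mul_pow, Real.norm_eq_abs, sq_abs]
        ring
    _ ≤ (1 - s) * (‖y‖ * (r - s * ‖y‖)) := by gcongr; nlinarith
    _ = 0 := by linear_combination ‖y‖ * hcompl

end InnerProductSpace

/-- `x - x⁺` is the normal cone direction of the nonnegative orthant at `x⁺`. -/
theorem EuclideanSpace.inner_sub_posPart_nonpos {ι : Type*} [Fintype ι]
    (x μ : EuclideanSpace ℝ ι) (hμ : ∀ k, 0 ≤ μ k) (t : ℝ) :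
    ⟪x - WithLp.toLp 2 (fun k => max (x k) 0), μ - t • WithLp.toLp 2 (fun k => max (x k) 0)⟫
      ≤ 0 := by
  rw [PiLp.inner_apply]
  refine Finset.sum_nonpos fun k _ => ?_
  simp only [PiLp.sub_apply, PiLp.smul_apply, smul_eq_mul, RCLike.inner_apply, conj_trivial]
  rcases le_or_gt 0 (x k) with hx | hx
  · simp [max_eq_left hx]
  · simpa [max_eq_right hx.le] using mul_nonpos_of_nonneg_of_nonpos (hμ k) hx.le

theorem stmt_3_general (K : ℕ) (r : ℝ) (hr : 0 < r)
    (x : EuclideanSpace ℝ (Fin K)) :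
    let xplus : EuclideanSpace ℝ (Fin K) := WithLp.toLp 2 (fun k => max (x k) 0)
    let μstar : EuclideanSpace ℝ (Fin K) := (r / max r ‖xplus‖) • xplus
    let C : Set (EuclideanSpace ℝ (Fin K)) := {μ | (∀ k, 0 ≤ μ k) ∧ ‖μ‖ ≤ r}
    μstar ∈ C ∧ ∀ μ ∈ C, μ ≠ μstar → ‖μstar - x‖ < ‖μ - x‖ := by
  intro xplus μstar C
  have hmem : μstar ∈ C :=
    ⟨fun k => mul_nonneg (div_nonneg hr.le (le_max_of_le_left hr.le)) (le_max_right _ _),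
      norm_div_max_norm_smul_le hr.le xplus⟩
  refine ⟨hmem, fun μ ⟨hμ_nonneg, hμ_le⟩ hne => norm_sub_lt_norm_sub_of_inner_sub_nonpos ?_ hne⟩
  rw [show x - μstar = (x - xplus) + (xplus - μstar) by abel, inner_add_left]
  exact add_nonpos (EuclideanSpace.inner_sub_posPart_nonpos x μ hμ_nonneg _)
    (inner_sub_div_max_norm_smul_nonpos hr.le hμ_le)

/-- The Euclidean projection of `x ∈ ℝ^K` onto the intersection of the closed ball of
radius `r` with the nonnegative orthant is `(r / max(r, ‖[x]₊‖)) • [x]₊`, where `[x]₊`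
is the componentwise positive part of `x`. -/
theorem stmt_3 (K : ℕ) (hK : 0 < K) (r : ℝ) (hr : 0 < r)
    (x : EuclideanSpace ℝ (Fin K)) :
    let xplus : EuclideanSpace ℝ (Fin K) := WithLp.toLp 2 (fun k => max (x k) 0)
    let μstar : EuclideanSpace ℝ (Fin K) := (r / max r ‖xplus‖) • xplus
    let C : Set (EuclideanSpace ℝ (Fin K)) := {μ | (∀ k, 0 ≤ μ k) ∧ ‖μ‖ ≤ r}
    μstar ∈ C ∧ ∀ μ ∈ C, μ ≠ μstar → ‖μstar - x‖ < ‖μ - x‖ :=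
  stmt_3_general K r hr x
end

section
/- Fix positive integers M, K, N, constants ζ_d > 0 and ϑ > 0, vectors ν̄_{ik} ∈ ℝ^M for i, k ∈ {1,…,K}, and positive coefficients β_{mi} > 0. Define the total spectral efficiency f(μ) = ∑_{k=1}^K SE_k(μ), where SE_k(μ) = ϑ·(log(b_k(μ) + c_k(μ)) − log c_k(μ)) with b_k(μ) = ζ_d·(ν̄_{kk}ᵀμ̄_k)² and c_k(μ) = ζ_d·(∑_{i≠k}(ν̄_{ik}ᵀμ̄_i)² + (1/N)·∑_{i=1}^K ∑_{m=1}^M β_{mi}·μ_{mi}²) + 1/N². Then f is differentiable on ℝ^{MK} and its gradient ∇f is Lipschitz continuous: there exists L > 0 such that ‖∇f(x) − ∇f(y)‖ ≤ L·‖x − y‖ for all x, y ∈ ℝ^{MK}. -/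
/-!
Both `c_k` and `b_k + c_k` are of the form `B μ μ + ε` with `B` a symmetric positive semidefinite
bilinear form and `ε = 1/N²`, so `f` is a linear combination of functions `z ↦ log (B z z + ε)`.
The gradient of such a function is `z ↦ 2 B z / (B z z + ε)`. Cauchy–Schwarz for `B` gives
`‖B z‖² ≤ ‖B‖ B z z`, and together with `B z z + ε ≥ ε` this makes that map `6‖B‖/ε`-Lipschitz.
-/

section LipschitzFDeriv

variable {E F : Type*} [NormedAddCommGroup E] [NormedSpace ℝ E]
  [NormedAddCommGroup F] [NormedSpace ℝ F]

def HasLipschitzFDeriv (f : E → F) : Prop :=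
  Differentiable ℝ f ∧ ∃ K, LipschitzWith K (fderiv ℝ f)

theorem HasLipschitzFDeriv.of_hasFDerivAt {f : E → F} {f' : E → E →L[ℝ] F} {K : NNReal}
    (hf : ∀ x, HasFDerivAt f (f' x) x) (hK : LipschitzWith K f') : HasLipschitzFDeriv f := by
  refine ⟨fun x => (hf x).differentiableAt, K, ?_⟩
  rwa [show fderiv ℝ f = f' from funext fun x => (hf x).fderiv]

theorem hasLipschitzFDeriv_const (c : F) : HasLipschitzFDeriv fun _ : E => c :=
  .of_hasFDerivAt (fun _ => hasFDerivAt_const c _) (LipschitzWith.const 0)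

theorem HasLipschitzFDeriv.add {f g : E → F} (hf : HasLipschitzFDeriv f)
    (hg : HasLipschitzFDeriv g) : HasLipschitzFDeriv fun x => f x + g x := by
  obtain ⟨hfd, Kf, hKf⟩ := hf
  obtain ⟨hgd, Kg, hKg⟩ := hg
  exact .of_hasFDerivAt (fun x => (hfd x).hasFDerivAt.add (hgd x).hasFDerivAt) (hKf.add hKg)

theorem HasLipschitzFDeriv.sub {f g : E → F} (hf : HasLipschitzFDeriv f)
    (hg : HasLipschitzFDeriv g) : HasLipschitzFDeriv fun x => f x - g x := by
  obtain ⟨hfd, Kf, hKf⟩ := hf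
  obtain ⟨hgd, Kg, hKg⟩ := hg
  exact .of_hasFDerivAt (fun x => (hfd x).hasFDerivAt.sub (hgd x).hasFDerivAt) (hKf.sub hKg)

theorem HasLipschitzFDeriv.const_smul {f : E → F} (hf : HasLipschitzFDeriv f) (c : ℝ) :
    HasLipschitzFDeriv fun x => c • f x := by
  obtain ⟨hfd, K, hK⟩ := hf
  exact .of_hasFDerivAt (fun x => (hfd x).hasFDerivAt.const_smul c)
    ((lipschitzWith_smul c).comp hK)

theorem HasLipschitzFDeriv.sum {ι : Type*} (s : Finset ι) {f : ι → E → F}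
    (hf : ∀ i ∈ s, HasLipschitzFDeriv (f i)) : HasLipschitzFDeriv fun x => ∑ i ∈ s, f i x := by
  classical
  induction s using Finset.induction_on with
  | empty => simpa using hasLipschitzFDeriv_const (0 : F)
  | insert i s hi ih =>
    simp only [Finset.sum_insert hi]
    exact (hf i (s.mem_insert_self i)).add (ih fun j hj => hf j (s.mem_insert_of_mem hj))

theorem HasLipschitzFDeriv.exists_norm_gradient_sub_le {E : Type*} [NormedAddCommGroup E]
    [InnerProductSpace ℝ E] [CompleteSpace E] {f : E → ℝ} (hf : HasLipschitzFDeriv f) :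
    ∃ L : ℝ, 0 < L ∧ ∀ x y, ‖gradient f x - gradient f y‖ ≤ L * ‖x - y‖ := by
  obtain ⟨-, K, hK⟩ := hf
  have hgrad : LipschitzWith K (gradient f) :=
    one_mul K ▸ (InnerProductSpace.toDual ℝ E).symm.lipschitz.comp hK
  refine ⟨K + 1, by positivity, fun x y => ?_⟩
  calc ‖gradient f x - gradient f y‖ ≤ K * ‖x - y‖ := hgrad.norm_sub_le x y
    _ ≤ (K + 1) * ‖x - y‖ := by gcongr; linarith

end LipschitzFDeriv

theorem add_mul_mul_le_of_sq_le {a b n p q ε : ℝ} (hε : 0 < ε) (hp : ε ≤ p) (hq : ε ≤ q)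
    (ha : a ^ 2 ≤ n * p) (hb : b ^ 2 ≤ n * q) : (a + b) * b * ε ≤ 2 * n * (p * q) := by
  have hq0 : 0 < q := hε.trans_le hq
  have hnq : 0 ≤ n * q := (sq_nonneg b).trans hb
  have hεε : ε * ε ≤ p * q := mul_le_mul hp hq hε.le (hε.le.trans hp)
  have hab : a * b * ε * q ≤ n * (p * q) * q := by
    nlinarith [sq_nonneg (a * q - b * ε), mul_le_mul_of_nonneg_left ha (sq_nonneg q),
      mul_le_mul_of_nonneg_left hb (sq_nonneg ε), mul_le_mul_of_nonneg_left hεε hnq]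
  have hbb : b * b * ε ≤ n * (p * q) := by
    nlinarith [mul_le_mul_of_nonneg_left hb hε.le, mul_le_mul_of_nonneg_left hp hnq]
  nlinarith [le_of_mul_le_mul_right hab hq0]

section SymmetricForm

variable {E : Type*} [NormedAddCommGroup E] [NormedSpace ℝ E] {B : E →L[ℝ] E →L[ℝ] ℝ}

theorem sq_apply_le_mul_apply_self (hsymm : ∀ x y, B x y = B y x) (hnonneg : ∀ x, 0 ≤ B x x)
    (x y : E) : B x y ^ 2 ≤ B x x * B y y := by
  have hquad : ∀ t : ℝ, 0 ≤ B y y * (t * t) + 2 * B x y * t + B x x := fun t => by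
    have := hnonneg (x + t • y)
    simp only [map_add, map_smul, add_apply, smul_apply, smul_eq_mul, hsymm y x] at this
    linarith
  have := discrim_le_zero hquad
  rw [discrim] at this
  linarith

theorem norm_apply_sq_le (hsymm : ∀ x y, B x y = B y x) (hnonneg : ∀ x, 0 ≤ B x x) (x : E) :
    ‖B x‖ ^ 2 ≤ ‖B‖ * B x x := by
  have hBxx : 0 ≤ ‖B‖ * B x x := mul_nonneg (norm_nonneg B) (hnonneg x)
  have hbound : ‖B x‖ ≤ √(‖B‖ * B x x) := by
    refine (B x).opNorm_le_bound (Real.sqrt_nonneg _) fun v => ?_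
    have hBvv : B v v ≤ ‖B‖ * ‖v‖ ^ 2 :=
      (le_abs_self _).trans ((B.le_opNorm₂ v v).trans_eq (by ring))
    calc ‖B x v‖ = |B x v| := Real.norm_eq_abs _
      _ ≤ √(‖B‖ * B x x * ‖v‖ ^ 2) := Real.abs_le_sqrt <|
          (sq_apply_le_mul_apply_self hsymm hnonneg x v).trans <| by
            nlinarith [mul_le_mul_of_nonneg_left hBvv (hnonneg x)]
      _ = √(‖B‖ * B x x) * ‖v‖ := by
          rw [Real.sqrt_mul hBxx, Real.sqrt_sq (norm_nonneg _)]
  calc ‖B x‖ ^ 2 ≤ √(‖B‖ * B x x) ^ 2 := pow_le_pow_left₀ (norm_nonneg _) hbound 2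
    _ = ‖B‖ * B x x := Real.sq_sqrt hBxx

theorem hasFDerivAt_apply_self (hsymm : ∀ x y, B x y = B y x) (x : E) :
    HasFDerivAt (fun z => B z z) ((2 : ℝ) • B x) x := by
  refine (B.hasFDerivAt_of_bilinear (hasFDerivAt_id x) (hasFDerivAt_id x)).congr_fderiv ?_
  ext v
  simp [hsymm v x, two_smul]

theorem hasFDerivAt_log_apply_self_add (hsymm : ∀ x y, B x y = B y x)
    (hnonneg : ∀ x, 0 ≤ B x x) {ε : ℝ} (hε : 0 < ε) (x : E) :
    HasFDerivAt (fun z => Real.log (B z z + ε)) ((B x x + ε)⁻¹ • (2 : ℝ) • B x) x :=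
  ((hasFDerivAt_apply_self hsymm x).add_const ε).log (by linarith [hnonneg x])

theorem lipschitzWith_inv_apply_self_add_smul (hsymm : ∀ x y, B x y = B y x)
    (hnonneg : ∀ x, 0 ≤ B x x) {ε : ℝ} (hε : 0 < ε) :
    LipschitzWith (Real.toNNReal (6 * ‖B‖ / ε)) fun x => (B x x + ε)⁻¹ • (2 : ℝ) • B x := by
  refine LipschitzWith.of_dist_le' fun x y => ?_
  rw [dist_eq_norm, dist_eq_norm]
  set p := B x x + ε with hp_def
  set q := B y y + ε with hq_def
  have hp : ε ≤ p := le_add_of_nonneg_left (hnonneg x)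
  have hq : ε ≤ q := le_add_of_nonneg_left (hnonneg y)
  have hp0 : 0 < p := hε.trans_le hp
  have hq0 : 0 < q := hε.trans_le hq
  have hBx : ‖B x‖ ^ 2 ≤ ‖B‖ * p :=
    (norm_apply_sq_le hsymm hnonneg x).trans (by nlinarith [norm_nonneg B])
  have hBy : ‖B y‖ ^ 2 ≤ ‖B‖ * q :=
    (norm_apply_sq_le hsymm hnonneg y).trans (by nlinarith [norm_nonneg B])
  have hqp : |q - p| ≤ (‖B x‖ + ‖B y‖) * ‖x - y‖ := by
    have : q - p = (B x + B y) (y - x) := by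
      simp only [hp_def, hq_def, map_sub, add_apply, hsymm y x]
      ring
    rw [this, norm_sub_rev x y]
    exact ((B x + B y).le_opNorm _).trans
      (mul_le_mul_of_nonneg_right (norm_add_le _ _) (norm_nonneg _))
  have hsplit : p⁻¹ • (2 : ℝ) • B x - q⁻¹ • (2 : ℝ) • B y
      = (2 * p⁻¹) • B (x - y) + (2 * (q - p) / (p * q)) • B y := by
    ext v
    simp only [sub_apply, add_apply, smul_apply, map_sub, smul_eq_mul]
    field_simp
    ring
  have hcross : |q - p| / (p * q) * ‖B y‖ ≤ 2 * ‖B‖ / ε * ‖x - y‖ := by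
    have hmain : (‖B x‖ + ‖B y‖) * ‖B y‖ / (p * q) ≤ 2 * ‖B‖ / ε := by
      rw [div_le_div_iff₀ (mul_pos hp0 hq0) hε]
      exact add_mul_mul_le_of_sq_le hε hp hq hBx hBy
    calc |q - p| / (p * q) * ‖B y‖ ≤ (‖B x‖ + ‖B y‖) * ‖x - y‖ / (p * q) * ‖B y‖ := by gcongr
      _ = (‖B x‖ + ‖B y‖) * ‖B y‖ / (p * q) * ‖x - y‖ := by ring
      _ ≤ 2 * ‖B‖ / ε * ‖x - y‖ := by gcongr
  calc ‖p⁻¹ • (2 : ℝ) • B x - q⁻¹ • (2 : ℝ) • B y‖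
      ≤ 2 * p⁻¹ * (‖B‖ * ‖x - y‖) + 2 * (|q - p| / (p * q) * ‖B y‖) := by
        rw [hsplit]
        refine (norm_add_le _ _).trans (add_le_add ?_ ?_)
        · rw [norm_smul, Real.norm_of_nonneg (by positivity)]
          exact mul_le_mul_of_nonneg_left (B.le_opNorm _) (by positivity)
        · rw [norm_smul, Real.norm_eq_abs, abs_div, abs_mul, abs_two,
            abs_of_pos (mul_pos hp0 hq0)]
          rw [mul_div_assoc, mul_assoc]
    _ ≤ 2 * ε⁻¹ * (‖B‖ * ‖x - y‖) + 2 * (2 * ‖B‖ / ε * ‖x - y‖) := by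
        gcongr
    _ = 6 * ‖B‖ / ε * ‖x - y‖ := by ring

theorem hasLipschitzFDeriv_log_apply_self_add (hsymm : ∀ x y, B x y = B y x)
    (hnonneg : ∀ x, 0 ≤ B x x) {ε : ℝ} (hε : 0 < ε) :
    HasLipschitzFDeriv fun z => Real.log (B z z + ε) :=
  .of_hasFDerivAt (hasFDerivAt_log_apply_self_add hsymm hnonneg hε)
    (lipschitzWith_inv_apply_self_add_smul hsymm hnonneg hε)

end SymmetricForm

open Finset

section SpectralEfficiency

variable {M K : ℕ}

/-- `blockInner ν i k μ` is `ν̄_{ik}ᵀ μ̄_i`. -/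
noncomputable def blockInner (ν : Fin K → Fin K → Fin M → ℝ) (i k : Fin K) :
    EuclideanSpace ℝ (Fin M × Fin K) →L[ℝ] ℝ :=
  ∑ m, ν i k m • EuclideanSpace.proj (m, i)

theorem blockInner_apply (ν : Fin K → Fin K → Fin M → ℝ) (i k : Fin K)
    (μ : EuclideanSpace ℝ (Fin M × Fin K)) :
    blockInner ν i k μ = ∑ m, ν i k m * μ (m, i) := by
  simp [blockInner]

/-- The quadratic part of `c_k`: `c_k μ = interferenceForm N ζd ν β k μ μ + 1/N²`. -/
noncomputable def interferenceForm (N : ℕ) (ζd : ℝ) (ν : Fin K → Fin K → Fin M → ℝ)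
    (β : Fin M → Fin K → ℝ) (k : Fin K) :
    EuclideanSpace ℝ (Fin M × Fin K) →L[ℝ] EuclideanSpace ℝ (Fin M × Fin K) →L[ℝ] ℝ :=
  ζd • (∑ i ∈ univ.erase k, (blockInner ν i k).smulRight (blockInner ν i k)
    + (1 / (N : ℝ)) • ∑ i, ∑ m, β m i •
      (EuclideanSpace.proj (m, i)).smulRight (EuclideanSpace.proj (m, i)))

noncomputable def signalInterferenceForm (N : ℕ) (ζd : ℝ) (ν : Fin K → Fin K → Fin M → ℝ)
    (β : Fin M → Fin K → ℝ) (k : Fin K) :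
    EuclideanSpace ℝ (Fin M × Fin K) →L[ℝ] EuclideanSpace ℝ (Fin M × Fin K) →L[ℝ] ℝ :=
  interferenceForm N ζd ν β k + ζd • (blockInner ν k k).smulRight (blockInner ν k k)

variable (N : ℕ) (ζd : ℝ) (ν : Fin K → Fin K → Fin M → ℝ) (β : Fin M → Fin K → ℝ) (k : Fin K)

theorem interferenceForm_apply (x y : EuclideanSpace ℝ (Fin M × Fin K)) :
    interferenceForm N ζd ν β k x y
      = ζd * (∑ i ∈ univ.erase k, blockInner ν i k x * blockInner ν i k y
        + 1 / (N : ℝ) * ∑ i, ∑ m, β m i * (x (m, i) * y (m, i))) := by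
  simp only [interferenceForm, smul_apply, add_apply, _root_.sum_apply,
    ContinuousLinearMap.smulRight_apply, PiLp.proj_apply, smul_eq_mul]

theorem signalInterferenceForm_apply (x y : EuclideanSpace ℝ (Fin M × Fin K)) :
    signalInterferenceForm N ζd ν β k x y
      = interferenceForm N ζd ν β k x y + ζd * (blockInner ν k k x * blockInner ν k k y) := by
  simp only [signalInterferenceForm, add_apply, smul_apply, ContinuousLinearMap.smulRight_apply,
    smul_eq_mul]

theorem interferenceForm_symm (x y : EuclideanSpace ℝ (Fin M × Fin K)) :
    interferenceForm N ζd ν β k x y = interferenceForm N ζd ν β k y x := by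
  simp only [interferenceForm_apply, mul_comm]

theorem signalInterferenceForm_symm (x y : EuclideanSpace ℝ (Fin M × Fin K)) :
    signalInterferenceForm N ζd ν β k x y = signalInterferenceForm N ζd ν β k y x := by
  simp only [signalInterferenceForm_apply, interferenceForm_symm N ζd ν β k x y, mul_comm]

variable {ζd β}

theorem interferenceForm_self_nonneg (hζd : 0 ≤ ζd) (hβ : ∀ m i, 0 ≤ β m i)
    (x : EuclideanSpace ℝ (Fin M × Fin K)) : 0 ≤ interferenceForm N ζd ν β k x x := by
  rw [interferenceForm_apply]
  refine mul_nonneg hζd (add_nonneg (sum_nonneg fun i _ => mul_self_nonneg _) ?_)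
  exact mul_nonneg (by positivity) <| sum_nonneg fun i _ => sum_nonneg fun m _ =>
    mul_nonneg (hβ m i) (mul_self_nonneg _)

theorem signalInterferenceForm_self_nonneg (hζd : 0 ≤ ζd) (hβ : ∀ m i, 0 ≤ β m i)
    (x : EuclideanSpace ℝ (Fin M × Fin K)) : 0 ≤ signalInterferenceForm N ζd ν β k x x := by
  rw [signalInterferenceForm_apply]
  exact add_nonneg (interferenceForm_self_nonneg N ν k hζd hβ x)
    (mul_nonneg hζd (mul_self_nonneg _))

end SpectralEfficiency

theorem stmt_10_general (M K N : ℕ) (hN : 0 < N)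
    (ζd : ℝ) (hζd : 0 < ζd) (ϑ : ℝ)
    (ν : Fin K → Fin K → Fin M → ℝ)
    (β : Fin M → Fin K → ℝ) (hβ : ∀ m i, 0 < β m i) :
    let b : Fin K → EuclideanSpace ℝ (Fin M × Fin K) → ℝ := fun k μ =>
      ζd * (∑ m : Fin M, ν k k m * μ (m, k)) ^ 2
    let c : Fin K → EuclideanSpace ℝ (Fin M × Fin K) → ℝ := fun k μ =>
      ζd * ((∑ i ∈ Finset.univ.erase k, (∑ m : Fin M, ν i k m * μ (m, i)) ^ 2)
        + (1 / (N : ℝ)) * ∑ i : Fin K, ∑ m : Fin M, β m i * (μ (m, i)) ^ 2)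
        + 1 / (N : ℝ) ^ 2
    let SE : Fin K → EuclideanSpace ℝ (Fin M × Fin K) → ℝ := fun k μ =>
      ϑ * (Real.log (b k μ + c k μ) - Real.log (c k μ))
    let f : EuclideanSpace ℝ (Fin M × Fin K) → ℝ := fun μ => ∑ k : Fin K, SE k μ
    Differentiable ℝ f ∧
      ∃ L : ℝ, 0 < L ∧ ∀ x y : EuclideanSpace ℝ (Fin M × Fin K),
        ‖gradient f x - gradient f y‖ ≤ L * ‖x - y‖ := by
  intro b c SE f
  set ε : ℝ := 1 / (N : ℝ) ^ 2
  have hε : 0 < ε := by positivity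
  have hc : ∀ k μ, c k μ = interferenceForm N ζd ν β k μ μ + ε := fun k μ => by
    simp only [c, interferenceForm_apply, blockInner_apply, ← sq]
    rfl
  have hbc : ∀ k μ, b k μ + c k μ = signalInterferenceForm N ζd ν β k μ μ + ε := fun k μ => by
    rw [signalInterferenceForm_apply, hc, blockInner_apply]
    simp only [b, sq]
    ring
  have hf : f = fun μ => ∑ k, ϑ • (Real.log (signalInterferenceForm N ζd ν β k μ μ + ε)
      - Real.log (interferenceForm N ζd ν β k μ μ + ε)) := by
    funext μ
    exact sum_congr rfl fun k _ => by rw [← hbc, ← hc, smul_eq_mul]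
  have hβ' : ∀ m i, 0 ≤ β m i := fun m i => (hβ m i).le
  have hsmooth : HasLipschitzFDeriv f := hf ▸ HasLipschitzFDeriv.sum _ fun k _ =>
    ((hasLipschitzFDeriv_log_apply_self_add (signalInterferenceForm_symm N ζd ν β k)
        (signalInterferenceForm_self_nonneg N ν k hζd.le hβ') hε).sub
      (hasLipschitzFDeriv_log_apply_self_add (interferenceForm_symm N ζd ν β k)
        (interferenceForm_self_nonneg N ν k hζd.le hβ') hε)).const_smul ϑ
  exact ⟨hsmooth.1, hsmooth.exists_norm_gradient_sub_le⟩

/-- The total spectral efficiency `f(μ) = ∑ₖ SE_k(μ)` is differentiable on `ℝ^{MK}`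
and its gradient is Lipschitz continuous. -/
theorem stmt_10 (M K N : ℕ) (hM : 0 < M) (hK : 0 < K) (hN : 0 < N)
    (ζd : ℝ) (hζd : 0 < ζd) (ϑ : ℝ) (hϑ : 0 < ϑ)
    (ν : Fin K → Fin K → Fin M → ℝ)
    (β : Fin M → Fin K → ℝ) (hβ : ∀ m i, 0 < β m i) :
    let b : Fin K → EuclideanSpace ℝ (Fin M × Fin K) → ℝ := fun k μ =>
      ζd * (∑ m : Fin M, ν k k m * μ (m, k)) ^ 2
    let c : Fin K → EuclideanSpace ℝ (Fin M × Fin K) → ℝ := fun k μ =>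
      ζd * ((∑ i ∈ Finset.univ.erase k, (∑ m : Fin M, ν i k m * μ (m, i)) ^ 2)
        + (1 / (N : ℝ)) * ∑ i : Fin K, ∑ m : Fin M, β m i * (μ (m, i)) ^ 2)
        + 1 / (N : ℝ) ^ 2
    let SE : Fin K → EuclideanSpace ℝ (Fin M × Fin K) → ℝ := fun k μ =>
      ϑ * (Real.log (b k μ + c k μ) - Real.log (c k μ))
    let f : EuclideanSpace ℝ (Fin M × Fin K) → ℝ := fun μ => ∑ k : Fin K, SE k μ
    Differentiable ℝ f ∧
      ∃ L : ℝ, 0 < L ∧ ∀ x y : EuclideanSpace ℝ (Fin M × Fin K),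
        ‖gradient f x - gradient f y‖ ≤ L * ‖x - y‖ :=
  stmt_10_general M K N hN ζd hζd ϑ ν β hβ
end

section
/- Let E be a finite-dimensional real inner product space, S ⊆ E a nonempty closed convex set, L > 0, f : E → ℝ differentiable with L-Lipschitz gradient, and 0 < α < 1/L. Let sequences (μⁿ), (vⁿ), (zⁿ) in E satisfy: μ¹ ∈ S; for every n ≥ 1, zⁿ⁺¹ ∈ S, vⁿ⁺¹ is a projection of μⁿ + α∇f(μⁿ) onto S, and μⁿ⁺¹ = zⁿ⁺¹ if f(zⁿ⁺¹) ≥ f(vⁿ⁺¹) while μⁿ⁺¹ = vⁿ⁺¹ otherwise. Then for every n ≥ 1, f(μⁿ⁺¹) ≥ f(vⁿ⁺¹) ≥ f(μⁿ), so the sequence (f(μⁿ)) is monotone nondecreasing; if moreover S is compact, then (f(μⁿ)) converges. -/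
/-!
Each projected gradient step is an ascent step. If `w` is the projection of `m + α ∇f(m)` onto
`S` and `m ∈ S`, the variational inequality of the projection gives
`α ⟪∇f(m), w - m⟫ ≥ ‖w - m‖²`, while the mean value inequality for the `L`-Lipschitz gradient
gives `f(w) ≥ f(m) + ⟪∇f(m), w - m⟫ - L ‖w - m‖²`. Together,
`α (f(w) - f(m)) ≥ (1 - α L) ‖w - m‖² ≥ 0`. The monotone rule then only keeps the better of the
two candidates, and on a compact `S` the nondecreasing values `f(μⁿ)` are bounded above.
-/

open scoped RealInnerProductSpace

section

variable {E : Type*} [NormedAddCommGroup E] [InnerProductSpace ℝ E]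

def IsProjection (S : Set E) (x w : E) : Prop :=
  w ∈ S ∧ ∀ p ∈ S, ‖w - x‖ ≤ ‖p - x‖

theorem IsProjection.real_inner_sub_sub_nonpos {S : Set E} (hS : Convex ℝ S) {x w : E}
    (h : IsProjection S x w) {m : E} (hm : m ∈ S) : ⟪x - w, m - w⟫ ≤ 0 := by
  refine (norm_eq_iInf_iff_real_inner_le_zero hS h.1).mp ?_ m hm
  have : Nonempty S := ⟨⟨w, h.1⟩⟩
  refine le_antisymm (le_ciInf fun p => ?_) (ciInf_le ⟨0, ?_⟩ (⟨w, h.1⟩ : S))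
  · rw [norm_sub_rev, norm_sub_rev x]
    exact h.2 p p.2
  · rintro _ ⟨p, rfl⟩
    exact norm_nonneg _

theorem abs_sub_sub_inner_gradient_le [CompleteSpace E] {f : E → ℝ} {L : ℝ} (hL : 0 ≤ L)
    (hf : Differentiable ℝ f)
    (hlip : ∀ x y : E, ‖gradient f x - gradient f y‖ ≤ L * ‖x - y‖) (x y : E) :
    |f y - f x - ⟪gradient f x, y - x⟫| ≤ L * ‖y - x‖ ^ 2 := by
  have hbound : ∀ z ∈ Metric.closedBall x ‖y - x‖,
      ‖fderiv ℝ f z - fderiv ℝ f x‖ ≤ L * ‖y - x‖ := fun z hz => by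
    rw [← toDual_gradient, ← toDual_gradient, ← map_sub, LinearIsometryEquiv.norm_map]
    rw [Metric.mem_closedBall, dist_eq_norm] at hz
    exact (hlip z x).trans (by gcongr)
  have := (convex_closedBall x ‖y - x‖).norm_image_sub_le_of_norm_fderiv_le'
    (fun z _ => hf z) hbound (Metric.mem_closedBall_self (norm_nonneg _))
    (by rw [Metric.mem_closedBall, dist_eq_norm])
  rwa [← inner_gradient_left, Real.norm_eq_abs, mul_assoc, ← sq] at this

theorem IsProjection.le_apply_of_gradient_step [CompleteSpace E] {S : Set E} (hS : Convex ℝ S)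
    {f : E → ℝ} {L α : ℝ} (hL : 0 ≤ L) (hf : Differentiable ℝ f)
    (hlip : ∀ x y : E, ‖gradient f x - gradient f y‖ ≤ L * ‖x - y‖)
    (hα : 0 < α) (hαL : α * L < 1) {m w : E} (hm : m ∈ S)
    (h : IsProjection S (m + α • gradient f m) w) : f m ≤ f w := by
  set g := gradient f m
  have hvar : ‖w - m‖ ^ 2 ≤ α * ⟪g, w - m⟫ := by
    have := h.real_inner_sub_sub_nonpos hS hm
    rwa [show m + α • g - w = α • g - (w - m) by abel, show m - w = -(w - m) by abel,
      inner_neg_right, inner_sub_left, real_inner_smul_left, real_inner_self_eq_norm_sq,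
      neg_nonpos, sub_nonneg] at this
  have hdesc : ⟪g, w - m⟫ - L * ‖w - m‖ ^ 2 ≤ f w - f m := by
    have := (abs_le.mp (abs_sub_sub_inner_gradient_le hL hf hlip m w)).1
    linarith
  have hgain : 0 ≤ α * (f w - f m) := by
    nlinarith [sq_nonneg ‖w - m‖]
  linarith [(mul_nonneg_iff_of_pos_left hα).mp hgain]

end

theorem stmt_11_general {E : Type*} [NormedAddCommGroup E] [InnerProductSpace ℝ E]
    [FiniteDimensional ℝ E]
    (S : Set E) (hS_conv : Convex ℝ S)
    (L : ℝ) (hL : 0 < L)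
    (f : E → ℝ) (hf : Differentiable ℝ f)
    (hlip : ∀ x y : E, ‖gradient f x - gradient f y‖ ≤ L * ‖x - y‖)
    (α : ℝ) (hα0 : 0 < α) (hα1 : α < 1 / L)
    (μ v z : ℕ → E)
    (hμ1 : μ 1 ∈ S)
    (hz : ∀ n, 1 ≤ n → z (n + 1) ∈ S)
    (hv : ∀ n, 1 ≤ n → v (n + 1) ∈ S ∧
      ∀ w ∈ S, ‖v (n + 1) - (μ n + α • gradient f (μ n))‖ ≤
        ‖w - (μ n + α • gradient f (μ n))‖)
    (hμ : ∀ n, 1 ≤ n →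
      μ (n + 1) = if f (z (n + 1)) ≥ f (v (n + 1)) then z (n + 1) else v (n + 1)) :
    (∀ n, 1 ≤ n → f (μ n) ≤ f (v (n + 1)) ∧ f (v (n + 1)) ≤ f (μ (n + 1))) ∧
    (∀ n, 1 ≤ n → f (μ n) ≤ f (μ (n + 1))) ∧
    (IsCompact S →
      ∃ l : ℝ, Filter.Tendsto (fun n => f (μ (n + 1))) Filter.atTop (nhds l)) := by
  have hμS : ∀ n, 1 ≤ n → μ n ∈ S := by
    intro n hn
    induction n, hn using Nat.le_induction with
    | base => exact hμ1
    | succ n hn _ =>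
      rw [hμ n hn]
      split_ifs
      exacts [hz n hn, (hv n hn).1]
  have hstep : ∀ n, 1 ≤ n → f (μ n) ≤ f (v (n + 1)) := fun n hn =>
    IsProjection.le_apply_of_gradient_step hS_conv hL.le hf hlip hα0
      ((lt_div_iff₀ hL).mp hα1) (hμS n hn) (hv n hn)
  have hselect : ∀ n, 1 ≤ n → f (v (n + 1)) ≤ f (μ (n + 1)) := fun n hn => by
    rw [hμ n hn]
    split_ifs with h
    exacts [h, le_rfl]
  have hmono : ∀ n, 1 ≤ n → f (μ n) ≤ f (μ (n + 1)) := fun n hn =>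
    (hstep n hn).trans (hselect n hn)
  refine ⟨fun n hn => ⟨hstep n hn, hselect n hn⟩, hmono, fun hK => ?_⟩
  have hbdd : BddAbove (Set.range fun n => f (μ (n + 1))) := by
    obtain ⟨b, hb⟩ := (hK.image hf.continuous).bddAbove
    exact ⟨b, fun _ ⟨n, hn⟩ => hn ▸ hb ⟨μ (n + 1), hμS (n + 1) n.succ_pos, rfl⟩⟩
  exact ⟨_, tendsto_atTop_ciSup (monotone_nat_of_le_succ fun n => hmono (n + 1)
    n.succ_pos) hbdd⟩

/-- Monotonicity of the monotone APG iteration: `f(μⁿ⁺¹) ≥ f(vⁿ⁺¹) ≥ f(μⁿ)` for every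
`n ≥ 1`, so `(f(μⁿ))` is nondecreasing; if moreover `S` is compact, `(f(μⁿ))` converges. -/
theorem stmt_11 {E : Type*} [NormedAddCommGroup E] [InnerProductSpace ℝ E]
    [FiniteDimensional ℝ E]
    (S : Set E) (hS_ne : S.Nonempty) (hS_closed : IsClosed S) (hS_conv : Convex ℝ S)
    (L : ℝ) (hL : 0 < L)
    (f : E → ℝ) (hf : Differentiable ℝ f)
    (hlip : ∀ x y : E, ‖gradient f x - gradient f y‖ ≤ L * ‖x - y‖)
    (α : ℝ) (hα0 : 0 < α) (hα1 : α < 1 / L)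
    (μ v z : ℕ → E)
    (hμ1 : μ 1 ∈ S)
    (hz : ∀ n, 1 ≤ n → z (n + 1) ∈ S)
    (hv : ∀ n, 1 ≤ n → v (n + 1) ∈ S ∧
      ∀ w ∈ S, ‖v (n + 1) - (μ n + α • gradient f (μ n))‖ ≤
        ‖w - (μ n + α • gradient f (μ n))‖)
    (hμ : ∀ n, 1 ≤ n →
      μ (n + 1) = if f (z (n + 1)) ≥ f (v (n + 1)) then z (n + 1) else v (n + 1)) :
    (∀ n, 1 ≤ n → f (μ n) ≤ f (v (n + 1)) ∧ f (v (n + 1)) ≤ f (μ (n + 1))) ∧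
    (∀ n, 1 ≤ n → f (μ n) ≤ f (μ (n + 1))) ∧
    (IsCompact S →
      ∃ l : ℝ, Filter.Tendsto (fun n => f (μ (n + 1))) Filter.atTop (nhds l)) :=
  stmt_11_general S hS_conv L hL f hf hlip α hα0 hα1 μ v z hμ1 hz hv hμ
end

section
/- Fix positive integers M, K, N, constants ζ_d > 0, ϑ > 0 and τ > 0, vectors ν̄_{ik} ∈ ℝ^M for i, k ∈ {1,…,K}, and positive coefficients β_{mi} > 0. Let f_τ(μ) = −(1/τ)·log((1/K)·∑_{k=1}^K exp(−τ·SE_k(μ))) be the log-sum-exp smoothing of the minimum user spectral efficiency on ℝ^{MK}, let S = {μ ∈ ℝ^{MK} : μ ≥ 0 componentwise and ∑_{k=1}^K μ_{mk}² ≤ 1/N for each m} be the feasible set, and suppose L > 0 is a Lipschitz constant of ∇f_τ. If 0 < α < 1/L, then the iterates (μⁿ) generated by the monotone APG algorithm applied to f_τ (with t₀ = t₁ = 1, tₙ₊₁ = (√(4tₙ² + 1) + 1)/2, extrapolation yⁿ = μⁿ + (tₙ₋₁/tₙ)(zⁿ − μⁿ) + ((tₙ₋₁ − 1)/tₙ)(μⁿ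 − μⁿ⁻¹), projected steps zⁿ⁺¹ = P_S(yⁿ + α∇f_τ(yⁿ)) and vⁿ⁺¹ = P_S(μⁿ + α∇f_τ(μⁿ)), and μⁿ⁺¹ chosen as zⁿ⁺¹ if f_τ(zⁿ⁺¹) ≥ f_τ(vⁿ⁺¹) and vⁿ⁺¹ otherwise, starting from μ⁰ = μ¹ = z¹ ∈ S) are bounded, and every accumulation point μ* of (μⁿ) satisfies ⟨∇f_τ(μ*), z − μ*⟩ ≤ 0 for all z ∈ S, i.e. μ* is a critical point of maximizing the smoothed minimum spectral efficiency over S. -/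
/-!
All iterates lie in the compact convex set `S`. By the variational inequality characterising
the projection and the quadratic lower bound for functions with `L`-Lipschitz gradient, the
projected step from `μⁿ` satisfies `f(vⁿ⁺¹) ≥ f(μⁿ) + (1/α - L/2) ‖vⁿ⁺¹ - μⁿ‖²`, and the
monotone update gives `f(μⁿ⁺¹) ≥ f(vⁿ⁺¹)`. Hence `f(μⁿ)` is nondecreasing and bounded, so
`‖vⁿ⁺¹ - μⁿ‖ → 0`, and the variational inequality for `vⁿ⁺¹` passes to the limit along any
convergent subsequence of `μⁿ`.
-/

open Filter Topology Set
open scoped NNReal RealInnerProductSpace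

section ProjectedGradient

variable {E : Type*} [NormedAddCommGroup E] [InnerProductSpace ℝ E]

theorem inner_sub_le_zero_of_isMinOn_norm_sub {S : Set E} (hS : Convex ℝ S) {u p w : E}
    (hp : p ∈ S) (hmin : IsMinOn (‖· - u‖) S p) (hw : w ∈ S) : ⟪u - p, w - p⟫ ≤ 0 := by
  have hmin' : IsMinOn (fun w => ‖u - w‖) S p := by
    simpa only [norm_sub_rev u] using hmin
  exact (norm_eq_iInf_iff_real_inner_le_zero hS hp).1 (hmin'.iInf_eq hp).symm w hw

variable [CompleteSpace E] {f : E → ℝ} {K : ℝ≥0}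

theorem LipschitzWith.add_inner_gradient_sub_le (hLip : LipschitzWith K (gradient f))
    (hf : Differentiable ℝ f) (x y : E) :
    f x + ⟪gradient f x, y - x⟫ - K / 2 * ‖y - x‖ ^ 2 ≤ f y := by
  set d := y - x
  -- `g' ≥ 0` on `[0, ∞)` by the Lipschitz bound, and `g 0 ≤ g 1` is the claim.
  set g : ℝ → ℝ := fun s => f (x + s • d) - s * ⟪gradient f x, d⟫ + K / 2 * ‖d‖ ^ 2 * s ^ 2
  have hg : ∀ s, HasDerivAt g
      (⟪gradient f (x + s • d), d⟫ - ⟪gradient f x, d⟫ + K * ‖d‖ ^ 2 * s) s := by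
    intro s
    have hline : HasDerivAt (fun r : ℝ => x + r • d) d s := by
      simpa using ((hasDerivAt_id s).smul_const d).const_add x
    have hfline := (hf (x + s • d)).hasGradientAt.hasFDerivAt.comp_hasDerivAt s hline
    simp only [Function.comp_def, InnerProductSpace.toDual_apply_apply] at hfline
    have hquad : HasDerivAt (fun r : ℝ => K / 2 * ‖d‖ ^ 2 * r ^ 2)
        (K / 2 * ‖d‖ ^ 2 * (2 * s)) s := by
      simpa using (hasDerivAt_pow 2 s).const_mul (K / 2 * ‖d‖ ^ 2)
    exact ((hfline.sub (hasDerivAt_mul_const ⟪gradient f x, d⟫)).add hquad).congr_deriv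
      (by ring)
  have hg' : ∀ s, 0 ≤ s →
      0 ≤ ⟪gradient f (x + s • d), d⟫ - ⟪gradient f x, d⟫ + K * ‖d‖ ^ 2 * s := by
    intro s hs
    have hgrad : ‖gradient f (x + s • d) - gradient f x‖ ≤ K * (s * ‖d‖) := by
      simpa [norm_smul, abs_of_nonneg hs] using hLip.norm_sub_le (x + s • d) x
    have := (abs_real_inner_le_norm (gradient f (x + s • d) - gradient f x) d).trans
      (mul_le_mul_of_nonneg_right hgrad (norm_nonneg d))
    rw [inner_sub_left] at this
    nlinarith [neg_abs_le (⟪gradient f (x + s • d), d⟫ - ⟪gradient f x, d⟫)]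
  have hmono : MonotoneOn g (Ici 0) :=
    monotoneOn_of_hasDerivWithinAt_nonneg (convex_Ici 0)
      (fun s _ => (hg s).continuousAt.continuousWithinAt)
      (fun s _ => (hg s).hasDerivWithinAt)
      (fun s hs => hg' s (interior_subset hs))
  have h01 : g 0 ≤ g 1 := hmono self_mem_Ici (mem_Ici.2 zero_le_one) zero_le_one
  simp only [g, d, zero_smul, add_zero, one_smul, add_sub_cancel] at h01
  linarith

theorem add_mul_norm_sub_sq_le_of_isMinOn {S : Set E} (hS : Convex ℝ S)
    (hf : Differentiable ℝ f) (hLip : LipschitzWith K (gradient f)) {α : ℝ} (hα : 0 < α)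
    {x p : E} (hx : x ∈ S) (hp : p ∈ S) (hmin : IsMinOn (‖· - (x + α • gradient f x)‖) S p) :
    f x + (1 / α - K / 2) * ‖p - x‖ ^ 2 ≤ f p := by
  have hvi := inner_sub_le_zero_of_isMinOn_norm_sub hS hp hmin hx
  rw [show x + α • gradient f x - p = -(p - x) + α • gradient f x by abel,
    show x - p = -(p - x) by abel, inner_add_left, inner_neg_neg, real_inner_self_eq_norm_sq,
    real_inner_smul_left, inner_neg_right] at hvi
  have hgrad : 1 / α * ‖p - x‖ ^ 2 ≤ ⟪gradient f x, p - x⟫ := by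
    rw [div_mul_eq_mul_div, one_mul, div_le_iff₀ hα]
    linarith
  linarith [hLip.add_inner_gradient_sub_le hf x p]

theorem tendsto_sub_nhds_zero_of_eventually_le_succ {u : ℕ → ℝ}
    (hmono : ∀ᶠ n in atTop, u n ≤ u (n + 1)) (hbdd : BddAbove (range u)) :
    Tendsto (fun n => u (n + 1) - u n) atTop (𝓝 0) := by
  obtain ⟨N, hN⟩ := eventually_atTop.1 hmono
  have hshift : Monotone fun n => u (n + N) :=
    monotone_nat_of_le_succ fun n => by simpa only [add_right_comm] using hN (n + N) le_add_self
  have hlim := tendsto_atTop_ciSup hshift (hbdd.mono (range_comp_subset_range (· + N) u))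
  refine (tendsto_add_atTop_iff_nat N).1 ?_
  simpa only [Function.comp_def, add_right_comm _ 1 N, sub_self] using
    (hlim.comp (tendsto_add_atTop_nat 1)).sub hlim

section Ascent

variable {S : Set E} {α : ℝ} {μ v : ℕ → E}

theorem tendsto_sub_nhds_zero_of_projected_gradient_ascent (hS : Convex ℝ S)
    (hSc : IsCompact S) (hf : Differentiable ℝ f) (hLip : LipschitzWith K (gradient f))
    (hα : 0 < α) (hαK : α * K < 2) (hμ : ∀ n, μ n ∈ S)
    (hv : ∀ᶠ n in atTop, v n ∈ S ∧ IsMinOn (‖· - (μ n + α • gradient f (μ n))‖) S (v n))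
    (hμv : ∀ᶠ n in atTop, f (v n) ≤ f (μ (n + 1))) :
    Tendsto (fun n => v n - μ n) atTop (𝓝 0) := by
  have hc : 0 < 1 / α - K / 2 := by
    rw [sub_pos, lt_div_iff₀ hα]
    linarith
  have hstep : ∀ᶠ n in atTop, f (μ n) + (1 / α - K / 2) * ‖v n - μ n‖ ^ 2 ≤ f (μ (n + 1)) := by
    filter_upwards [hv, hμv] with n hvn hμvn
    exact (add_mul_norm_sub_sq_le_of_isMinOn hS hf hLip hα (hμ n) hvn.1 hvn.2).trans hμvn
  have hbdd : BddAbove (range fun n => f (μ n)) :=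
    (hSc.bddAbove_image hf.continuous.continuousOn).mono
      (range_subset_iff.2 fun n => mem_image_of_mem f (hμ n))
  have hgap := tendsto_sub_nhds_zero_of_eventually_le_succ (u := fun n => f (μ n))
    (hstep.mono fun n hn => by nlinarith [sq_nonneg ‖v n - μ n‖]) hbdd
  have hsq : Tendsto (fun n => ‖v n - μ n‖ ^ 2) atTop (𝓝 0) := by
    refine squeeze_zero' (.of_forall fun n => sq_nonneg _) (hstep.mono fun n hn => ?_)
      (by simpa only [zero_div] using hgap.div_const (1 / α - K / 2))
    rw [le_div_iff₀ hc]
    linarith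
  rw [tendsto_zero_iff_norm_tendsto_zero]
  simpa [Real.sqrt_sq (norm_nonneg _)] using hsq.sqrt

theorem inner_gradient_sub_le_zero_of_projected_gradient_ascent (hS : Convex ℝ S)
    (hSc : IsCompact S) (hf : Differentiable ℝ f) (hLip : LipschitzWith K (gradient f))
    (hα : 0 < α) (hαK : α * K < 2) (hμ : ∀ n, μ n ∈ S)
    (hv : ∀ᶠ n in atTop, v n ∈ S ∧ IsMinOn (‖· - (μ n + α • gradient f (μ n))‖) S (v n))
    (hμv : ∀ᶠ n in atTop, f (v n) ≤ f (μ (n + 1))) {φ : ℕ → ℕ} (hφ : Tendsto φ atTop atTop)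
    {μstar : E} (hlim : Tendsto (fun j => μ (φ j)) atTop (𝓝 μstar)) {w : E} (hw : w ∈ S) :
    ⟪gradient f μstar, w - μstar⟫ ≤ 0 := by
  have hvlim : Tendsto (fun j => v (φ j)) atTop (𝓝 μstar) := by
    simpa using ((tendsto_sub_nhds_zero_of_projected_gradient_ascent hS hSc hf hLip hα hαK hμ hv
      hμv).comp hφ).add hlim
  have hgradlim : Tendsto (fun j => gradient f (μ (φ j))) atTop (𝓝 (gradient f μstar)) :=
    (hLip.continuous.tendsto μstar).comp hlim
  have hinner : Tendsto (fun j => ⟪μ (φ j) + α • gradient f (μ (φ j)) - v (φ j), w - v (φ j)⟫)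
      atTop (𝓝 ⟪μstar + α • gradient f μstar - μstar, w - μstar⟫) :=
    ((hlim.add (hgradlim.const_smul α)).sub hvlim).inner (tendsto_const_nhds.sub hvlim)
  have hle : ⟪μstar + α • gradient f μstar - μstar, w - μstar⟫ ≤ 0 :=
    le_of_tendsto hinner ((hφ.eventually hv).mono fun j hj =>
      inner_sub_le_zero_of_isMinOn_norm_sub hS hj.1 hj.2 hw)
  rw [add_sub_cancel_left, real_inner_smul_left] at hle
  exact nonpos_of_mul_nonpos_right hle hα

end Ascent

end ProjectedGradient

section PowerControl

variable {ι κ : Type*} [Fintype κ]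

variable (ι κ) in
def powerConstraintSet (r : ℝ) : Set (EuclideanSpace ℝ (ι × κ)) :=
  {x | (∀ p, 0 ≤ x p) ∧ ∀ i, ∑ j, x (i, j) ^ 2 ≤ r}

theorem convex_powerConstraintSet (r : ℝ) : Convex ℝ (powerConstraintSet ι κ r) := by
  rintro x ⟨hx0, hxr⟩ y ⟨hy0, hyr⟩ a b ha hb hab
  refine ⟨fun p => ?_, fun i => ?_⟩
  · simp only [PiLp.add_apply, PiLp.smul_apply, smul_eq_mul]
    exact add_nonneg (mul_nonneg ha (hx0 p)) (mul_nonneg hb (hy0 p))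
  · calc ∑ j, (a • x + b • y) (i, j) ^ 2
        ≤ ∑ j, (a * x (i, j) ^ 2 + b * y (i, j) ^ 2) := Finset.sum_le_sum fun j _ => by
          simpa only [PiLp.add_apply, PiLp.smul_apply, smul_eq_mul] using
            (Even.convexOn_pow even_two).2 (mem_univ (x (i, j))) (mem_univ (y (i, j))) ha hb hab
      _ = a * ∑ j, x (i, j) ^ 2 + b * ∑ j, y (i, j) ^ 2 := by
          rw [Finset.sum_add_distrib, Finset.mul_sum, Finset.mul_sum]
      _ ≤ a * r + b * r := by gcongr <;> simp only [hxr, hyr]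
      _ = r := by rw [← add_mul, hab, one_mul]

theorem isCompact_powerConstraintSet [Fintype ι] (r : ℝ) :
    IsCompact (powerConstraintSet ι κ r) := by
  refine Metric.isCompact_of_isClosed_isBounded ?_ ?_
  · simp only [powerConstraintSet, ofPred_and, ofPred_forall]
    exact (isClosed_iInter fun p => isClosed_le continuous_const (by fun_prop)).inter
      (isClosed_iInter fun i => isClosed_le (by fun_prop) continuous_const)
  · refine (Metric.isBounded_closedBall (x := 0) (r := √(Fintype.card ι * r))).subset
      fun x hx => ?_
    rw [mem_closedBall_zero_iff, EuclideanSpace.norm_eq]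
    refine Real.sqrt_le_sqrt ?_
    calc ∑ p, ‖x p‖ ^ 2 = ∑ i, ∑ j, x (i, j) ^ 2 := by
          simp only [Real.norm_eq_abs, sq_abs, Fintype.sum_prod_type]
      _ ≤ ∑ _i : ι, r := Finset.sum_le_sum fun i _ => hx.2 i
      _ = Fintype.card ι * r := by simp

end PowerControl

section Smoothing

variable {F : Type*} [NormedAddCommGroup F] [NormedSpace ℝ F]

theorem Differentiable.log_add_sub_log {b c : F → ℝ} (hb : Differentiable ℝ b)
    (hc : Differentiable ℝ c) (hb0 : ∀ x, 0 ≤ b x) (hc0 : ∀ x, 0 < c x) :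
    Differentiable ℝ fun x => Real.log (b x + c x) - Real.log (c x) :=
  ((hb.add hc).log fun x => (add_pos_of_nonneg_of_pos (hb0 x) (hc0 x)).ne').sub
    (hc.log fun x => (hc0 x).ne')

theorem differentiable_logSumExp {ι : Type*} [Fintype ι] [Nonempty ι] {a : ℝ} (ha : 0 < a)
    (τ : ℝ) {g : ι → F → ℝ} (hg : ∀ i, Differentiable ℝ (g i)) :
    Differentiable ℝ fun x => -(1 / τ) * Real.log (a * ∑ i, Real.exp (-τ * g i x)) :=
  ((((Differentiable.fun_sum fun i _ => ((hg i).const_mul (-τ)).exp).const_mul a).log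
    fun _ => (mul_pos ha (Finset.sum_pos (fun _ _ => Real.exp_pos _) Finset.univ_nonempty)).ne')
    |>.const_mul _)

end Smoothing

theorem iterate_mem_of_monotone_update {X : Type*} {S : Set X} {f : X → ℝ} {μ z v : ℕ → X}
    (hμ0 : μ 0 = μ 1) (hμ1 : μ 1 ∈ S) (hz : ∀ n, 1 ≤ n → z (n + 1) ∈ S)
    (hv : ∀ n, 1 ≤ n → v (n + 1) ∈ S)
    (hupd : ∀ n, 1 ≤ n →
      μ (n + 1) = if f (z (n + 1)) ≥ f (v (n + 1)) then z (n + 1) else v (n + 1)) :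
    ∀ n, μ n ∈ S
  | 0 => hμ0 ▸ hμ1
  | 1 => hμ1
  | n + 2 => by
    rw [hupd (n + 1) n.succ_pos]
    split_ifs
    exacts [hz _ n.succ_pos, hv _ n.succ_pos]

theorem stmt_14_general (M K N : ℕ) (hK : 0 < K) (hN : 0 < N)
    (ζd : ℝ) (hζd : 0 < ζd) (ϑ : ℝ) (τ : ℝ)
    (ν : Fin K → Fin K → Fin M → ℝ)
    (β : Fin M → Fin K → ℝ) (hβ : ∀ m i, 0 < β m i)
    (L : ℝ) (hL : 0 < L) (α : ℝ) (hα0 : 0 < α) (hα1 : α < 1 / L)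
    (t : ℕ → ℝ)
    (μ y z v : ℕ → EuclideanSpace ℝ (Fin M × Fin K)) :
    let b : Fin K → EuclideanSpace ℝ (Fin M × Fin K) → ℝ := fun k μ =>
      ζd * (∑ m : Fin M, ν k k m * μ (m, k)) ^ 2
    let c : Fin K → EuclideanSpace ℝ (Fin M × Fin K) → ℝ := fun k μ =>
      ζd * ((∑ i ∈ Finset.univ.erase k, (∑ m : Fin M, ν i k m * μ (m, i)) ^ 2)
        + (1 / (N : ℝ)) * ∑ i : Fin K, ∑ m : Fin M, β m i * (μ (m, i)) ^ 2)
        + 1 / (N : ℝ) ^ 2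
    let SE : Fin K → EuclideanSpace ℝ (Fin M × Fin K) → ℝ := fun k μ =>
      ϑ * (Real.log (b k μ + c k μ) - Real.log (c k μ))
    let fτ : EuclideanSpace ℝ (Fin M × Fin K) → ℝ := fun μ =>
      -(1 / τ) * Real.log ((1 / (K : ℝ)) * ∑ k : Fin K, Real.exp (-τ * SE k μ))
    let S : Set (EuclideanSpace ℝ (Fin M × Fin K)) :=
      {μ | (∀ p, 0 ≤ μ p) ∧ ∀ m : Fin M, ∑ k : Fin K, (μ (m, k)) ^ 2 ≤ 1 / (N : ℝ)}
    -- `L` is a Lipschitz constant of `∇f_τ`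
    (∀ x₁ x₂ : EuclideanSpace ℝ (Fin M × Fin K),
      ‖gradient fτ x₁ - gradient fτ x₂‖ ≤ L * ‖x₁ - x₂‖) →
    -- initialization: μ⁰ = μ¹ = z¹ ∈ S
    μ 0 = μ 1 → μ 1 = z 1 → μ 1 ∈ S →
    -- extrapolation step
    (∀ n, 1 ≤ n → y n = μ n + (t (n - 1) / t n) • (z n - μ n)
      + ((t (n - 1) - 1) / t n) • (μ n - μ (n - 1))) →
    -- zⁿ⁺¹ = P_S(yⁿ + α ∇f_τ(yⁿ))
    (∀ n, 1 ≤ n → z (n + 1) ∈ S ∧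
      ∀ w ∈ S, ‖z (n + 1) - (y n + α • gradient fτ (y n))‖ ≤
        ‖w - (y n + α • gradient fτ (y n))‖) →
    -- vⁿ⁺¹ = P_S(μⁿ + α ∇f_τ(μⁿ))
    (∀ n, 1 ≤ n → v (n + 1) ∈ S ∧
      ∀ w ∈ S, ‖v (n + 1) - (μ n + α • gradient fτ (μ n))‖ ≤
        ‖w - (μ n + α • gradient fτ (μ n))‖) →
    -- monotone update
    (∀ n, 1 ≤ n →
      μ (n + 1) = if fτ (z (n + 1)) ≥ fτ (v (n + 1)) then z (n + 1) else v (n + 1)) →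
    (∃ C : ℝ, ∀ n, ‖μ n‖ ≤ C) ∧
    ∀ μstar : EuclideanSpace ℝ (Fin M × Fin K),
      (∃ φ : ℕ → ℕ, StrictMono φ ∧
        Filter.Tendsto (fun j => μ (φ j)) Filter.atTop (nhds μstar)) →
      ∀ w ∈ S, ⟪gradient fτ μstar, w - μstar⟫ ≤ 0 := by
  intro b c SE fτ S hLip hμ01 _ hμ1S _ hz hv hupd
  have hc : ∀ k x, 0 < c k x := fun k x =>
    add_pos_of_nonneg_of_pos (mul_nonneg hζd.le (add_nonneg (by positivity)
      (mul_nonneg (by positivity) (Finset.sum_nonneg fun i _ => Finset.sum_nonneg fun m _ =>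
        mul_nonneg (hβ m i).le (sq_nonneg _))))) (by positivity)
  have hfτ : Differentiable ℝ fτ := by
    have : Nonempty (Fin K) := ⟨⟨0, hK⟩⟩
    exact differentiable_logSumExp (by positivity) τ fun k =>
      (Differentiable.log_add_sub_log (by fun_prop) (by fun_prop)
        (fun x => mul_nonneg hζd.le (sq_nonneg _)) (hc k)).const_mul ϑ
  have hScomp : IsCompact S := isCompact_powerConstraintSet _
  have hμS := iterate_mem_of_monotone_update hμ01 hμ1S (fun n hn => (hz n hn).1)
    (fun n hn => (hv n hn).1) hupd
  obtain ⟨C, hC⟩ := isBounded_iff_forall_norm_le.1 hScomp.isBounded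
  refine ⟨⟨C, fun n => hC _ (hμS n)⟩, ?_⟩
  rintro μstar ⟨φ, hφ, hlim⟩ w hw
  have hLip' : LipschitzWith ⟨L, hL.le⟩ (gradient fτ) :=
    LipschitzWith.of_dist_le_mul fun x₁ x₂ => by
      rw [dist_eq_norm, dist_eq_norm]
      exact hLip x₁ x₂
  have hαL : α * L < 2 := by
    rw [lt_div_iff₀ hL] at hα1
    linarith
  refine inner_gradient_sub_le_zero_of_projected_gradient_ascent
    (convex_powerConstraintSet _) hScomp hfτ hLip' hα0 hαL hμS (v := fun n => v (n + 1))
    (eventually_atTop.2 ⟨1, fun n hn => ⟨(hv n hn).1, isMinOn_iff.2 (hv n hn).2⟩⟩)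
    (eventually_atTop.2 ⟨1, fun n hn => ?_⟩) hφ.tendsto_atTop hlim hw
  rw [hupd n hn]
  split_ifs with h
  exacts [h, le_rfl]

/-- Convergence of the monotone APG algorithm for the smoothed max-min fairness problem
in cell-free massive MIMO: applying APG to the log-sum-exp smoothing `f_τ` of the minimum
user spectral efficiency, with `L` a Lipschitz constant of `∇f_τ` and `0 < α < 1/L`, the
iterates are bounded and every accumulation point is a critical point of
`max {f_τ(μ) : μ ∈ S}`. -/
theorem stmt_14 (M K N : ℕ) (hM : 0 < M) (hK : 0 < K) (hN : 0 < N)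
    (ζd : ℝ) (hζd : 0 < ζd) (ϑ : ℝ) (hϑ : 0 < ϑ) (τ : ℝ) (hτ : 0 < τ)
    (ν : Fin K → Fin K → Fin M → ℝ)
    (β : Fin M → Fin K → ℝ) (hβ : ∀ m i, 0 < β m i)
    (L : ℝ) (hL : 0 < L) (α : ℝ) (hα0 : 0 < α) (hα1 : α < 1 / L)
    (t : ℕ → ℝ) (ht0 : t 0 = 1) (ht1 : t 1 = 1)
    (ht : ∀ n, 1 ≤ n → t (n + 1) = (Real.sqrt (4 * t n ^ 2 + 1) + 1) / 2)
    (μ y z v : ℕ → EuclideanSpace ℝ (Fin M × Fin K)) :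
    let b : Fin K → EuclideanSpace ℝ (Fin M × Fin K) → ℝ := fun k μ =>
      ζd * (∑ m : Fin M, ν k k m * μ (m, k)) ^ 2
    let c : Fin K → EuclideanSpace ℝ (Fin M × Fin K) → ℝ := fun k μ =>
      ζd * ((∑ i ∈ Finset.univ.erase k, (∑ m : Fin M, ν i k m * μ (m, i)) ^ 2)
        + (1 / (N : ℝ)) * ∑ i : Fin K, ∑ m : Fin M, β m i * (μ (m, i)) ^ 2)
        + 1 / (N : ℝ) ^ 2
    let SE : Fin K → EuclideanSpace ℝ (Fin M × Fin K) → ℝ := fun k μ =>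
      ϑ * (Real.log (b k μ + c k μ) - Real.log (c k μ))
    let fτ : EuclideanSpace ℝ (Fin M × Fin K) → ℝ := fun μ =>
      -(1 / τ) * Real.log ((1 / (K : ℝ)) * ∑ k : Fin K, Real.exp (-τ * SE k μ))
    let S : Set (EuclideanSpace ℝ (Fin M × Fin K)) :=
      {μ | (∀ p, 0 ≤ μ p) ∧ ∀ m : Fin M, ∑ k : Fin K, (μ (m, k)) ^ 2 ≤ 1 / (N : ℝ)}
    -- `L` is a Lipschitz constant of `∇f_τ`
    (∀ x₁ x₂ : EuclideanSpace ℝ (Fin M × Fin K),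
      ‖gradient fτ x₁ - gradient fτ x₂‖ ≤ L * ‖x₁ - x₂‖) →
    -- initialization: μ⁰ = μ¹ = z¹ ∈ S
    μ 0 = μ 1 → μ 1 = z 1 → μ 1 ∈ S →
    -- extrapolation step
    (∀ n, 1 ≤ n → y n = μ n + (t (n - 1) / t n) • (z n - μ n)
      + ((t (n - 1) - 1) / t n) • (μ n - μ (n - 1))) →
    -- zⁿ⁺¹ = P_S(yⁿ + α ∇f_τ(yⁿ))
    (∀ n, 1 ≤ n → z (n + 1) ∈ S ∧
      ∀ w ∈ S, ‖z (n + 1) - (y n + α • gradient fτ (y n))‖ ≤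
        ‖w - (y n + α • gradient fτ (y n))‖) →
    -- vⁿ⁺¹ = P_S(μⁿ + α ∇f_τ(μⁿ))
    (∀ n, 1 ≤ n → v (n + 1) ∈ S ∧
      ∀ w ∈ S, ‖v (n + 1) - (μ n + α • gradient fτ (μ n))‖ ≤
        ‖w - (μ n + α • gradient fτ (μ n))‖) →
    -- monotone update
    (∀ n, 1 ≤ n →
      μ (n + 1) = if fτ (z (n + 1)) ≥ fτ (v (n + 1)) then z (n + 1) else v (n + 1)) →
    (∃ C : ℝ, ∀ n, ‖μ n‖ ≤ C) ∧
    ∀ μstar : EuclideanSpace ℝ (Fin M × Fin K),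
      (∃ φ : ℕ → ℕ, StrictMono φ ∧
        Filter.Tendsto (fun j => μ (φ j)) Filter.atTop (nhds μstar)) →
      ∀ w ∈ S, ⟪gradient fτ μstar, w - μstar⟫ ≤ 0 :=
  stmt_14_general M K N hK hN ζd hζd ϑ τ ν β hβ L hL α hα0 hα1 t μ y z v
end
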